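/- Fix p : ℤ. (a) If φ ∈ range (d (p−1)) ∩ ker (Δ p) (φ is an exact harmonic p-element), then δ p φ ∈ ker (d (p−1)) (its codifferential is closed). (b) If β ∈ ker (Δ (p−1)) (β is a harmonic (p−1)-element), then δ p (d (p−1) β) ∈ range (d (p−2)) (the codifferential of d β is exact). Hence the map sending the class of φ to the class of δ p φ is a well-defined linear map from (range (d (p−1)) ∩ ker (Δ p)) / (image under d (p−1) of ker (Δ (p−1))) to ker (d (p−1)) / range (d (p−2)). -/
import Mathlib

/-- Transport along an equality of indices, as a linear map (the identity map). -/
def lcast (V : ℤ → Type*) [∀ p, AddCommGroup (V p)] [∀ p, Module ℝ (V p)]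
    {p q : ℤ} (h : p = q) : V p →ₗ[ℝ] V q := by
  subst h; exact LinearMap.id

/-- The differential `d (p-1)`, regarded as a linear map into `V p`. -/
def dTo (V : ℤ → Type*) [∀ p, AddCommGroup (V p)] [∀ p, Module ℝ (V p)]
    (d : ∀ p : ℤ, V p →ₗ[ℝ] V (p + 1)) (p : ℤ) : V (p - 1) →ₗ[ℝ] V p :=
  (lcast V (by omega)).comp (d (p - 1))

/-- The codifferential `δ (p+1)`, regarded as a linear map into `V p`. -/
def deltaTo (V : ℤ → Type*) [∀ p, AddCommGroup (V p)] [∀ p, Module ℝ (V p)]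
    (δ : ∀ p : ℤ, V p →ₗ[ℝ] V (p - 1)) (p : ℤ) : V (p + 1) →ₗ[ℝ] V p :=
  (lcast V (by omega)).comp (δ (p + 1))

/-- The Laplacian `Δ p = d (p-1) ∘ δ p + δ (p+1) ∘ d p : V p →ₗ[ℝ] V p`. -/
def Lap (V : ℤ → Type*) [∀ p, AddCommGroup (V p)] [∀ p, Module ℝ (V p)]
    (d : ∀ p : ℤ, V p →ₗ[ℝ] V (p + 1)) (δ : ∀ p : ℤ, V p →ₗ[ℝ] V (p - 1))
    (p : ℤ) : V p →ₗ[ℝ] V p :=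
  ((dTo V d p).comp (δ p)) + ((deltaTo V δ p).comp (d p))

section helpers
variable (V : ℤ → Type*) [∀ p, AddCommGroup (V p)] [∀ p, Module ℝ (V p)]

lemma lcast_eq_zero {p q : ℤ} (h : p = q) (x : V p) : lcast V h x = 0 ↔ x = 0 := by
  subst h; simp [lcast]

lemma d_lcast (d : ∀ p : ℤ, V p →ₗ[ℝ] V (p + 1)) {p q : ℤ} (h : p = q) (x : V p) :
    d q (lcast V h x) = lcast V (by omega) (d p x) := by
  subst h; rfl

lemma delta_lcast (δ : ∀ p : ℤ, V p →ₗ[ℝ] V (p - 1)) {p q : ℤ} (h : p = q) (x : V p) :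
    δ q (lcast V h x) = lcast V (by omega) (δ p x) := by
  subst h; rfl
end helpers

/-- **Well-definedness of the induced map (from the proof of Lemma 3).**
(a) The codifferential of an exact harmonic `p`-element is closed.
(b) The codifferential of the differential of a harmonic `(p-1)`-element is exact.
Hence `φ ↦ δ p φ` induces a well-defined linear map
`(range (d (p-1)) ∩ ker (Δ p)) / d (p-1) (ker (Δ (p-1))) → ker (d (p-1)) / range (d (p-2))`. -/
theorem delta_well_defined
    (V : ℤ → Type*) [∀ p, AddCommGroup (V p)] [∀ p, Module ℝ (V p)]
    (d : ∀ p : ℤ, V p →ₗ[ℝ] V (p + 1)) (δ : ∀ p : ℤ, V p →ₗ[ℝ] V (p - 1))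
    (hd : ∀ p : ℤ, (d (p + 1)).comp (d p) = 0)
    (hδ : ∀ p : ℤ, (δ (p - 1)).comp (δ p) = 0)
    (p : ℤ) :
    (∀ φ : V p, φ ∈ LinearMap.range (dTo V d p) ⊓ LinearMap.ker (Lap V d δ p) →
        δ p φ ∈ LinearMap.ker (d (p - 1))) ∧
    (∀ β : V (p - 1), β ∈ LinearMap.ker (Lap V d δ (p - 1)) →
        δ p (dTo V d p β) ∈ LinearMap.range (dTo V d (p - 1))) ∧
    ∃ f : (↥(LinearMap.range (dTo V d p) ⊓ LinearMap.ker (Lap V d δ p)) ⧸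
            (Submodule.comap
              (LinearMap.range (dTo V d p) ⊓ LinearMap.ker (Lap V d δ p)).subtype
              (Submodule.map (dTo V d p) (LinearMap.ker (Lap V d δ (p - 1))))))
          →ₗ[ℝ]
          (↥(LinearMap.ker (d (p - 1))) ⧸
            (Submodule.comap (LinearMap.ker (d (p - 1))).subtype
              (LinearMap.range (dTo V d (p - 1))))),
      ∀ (φ : V p) (hφ : φ ∈ LinearMap.range (dTo V d p) ⊓ LinearMap.ker (Lap V d δ p))
        (hδφ : δ p φ ∈ LinearMap.ker (d (p - 1))),
        f (Submodule.Quotient.mk ⟨φ, hφ⟩) = Submodule.Quotient.mk ⟨δ p φ, hδφ⟩ := by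
  have partA : ∀ φ : V p, φ ∈ LinearMap.range (dTo V d p) ⊓ LinearMap.ker (Lap V d δ p) →
      δ p φ ∈ LinearMap.ker (d (p - 1)) := by
    rintro φ ⟨⟨ψ, rfl⟩, hk⟩
    have hk' : dTo V d p (δ p (dTo V d p ψ)) + deltaTo V δ p (d p (dTo V d p ψ)) = 0 := by
      simpa [Lap] using (LinearMap.mem_ker.mp hk)
    have hdφ : d p (dTo V d p ψ) = 0 := by
      show d p (lcast V (by omega) (d (p - 1) ψ)) = 0
      rw [d_lcast, lcast_eq_zero]
      exact congrFun (congrArg DFunLike.coe (hd (p - 1))) ψ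
    rw [hdφ, map_zero, add_zero] at hk'
    have : lcast V (by omega : p - 1 + 1 = p) (d (p - 1) (δ p (dTo V d p ψ))) = 0 := hk'
    exact LinearMap.mem_ker.mpr ((lcast_eq_zero V _ _).mp this)
  have partB : ∀ β : V (p - 1), β ∈ LinearMap.ker (Lap V d δ (p - 1)) →
      δ p (dTo V d p β) ∈ LinearMap.range (dTo V d (p - 1)) := by
    intro β hβ
    have hβ' : dTo V d (p - 1) (δ (p - 1) β) + deltaTo V δ (p - 1) (d (p - 1) β) = 0 := by
      simpa [Lap] using (LinearMap.mem_ker.mp hβ)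
    have key : δ p (dTo V d p β) = deltaTo V δ (p - 1) (d (p - 1) β) := by
      show δ p (lcast V (by omega) (d (p - 1) β)) =
        lcast V (by omega) (δ (p - 1 + 1) (d (p - 1) β))
      rw [delta_lcast]
    rw [key]
    exact ⟨-(δ (p - 1) β), by rw [map_neg]; rw [neg_eq_iff_add_eq_zero]; exact hβ'⟩
  refine ⟨partA, partB, ?_⟩
  set S := LinearMap.range (dTo V d p) ⊓ LinearMap.ker (Lap V d δ p) with hS
  set K := LinearMap.ker (d (p - 1)) with hK
  set N₂ := Submodule.comap K.subtype (LinearMap.range (dTo V d (p - 1))) with hN₂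
  set N₁ := Submodule.comap S.subtype
      (Submodule.map (dTo V d p) (LinearMap.ker (Lap V d δ (p - 1)))) with hN₁
  let g0 : ↥S →ₗ[ℝ] ↥K :=
    LinearMap.codRestrict K ((δ p).comp S.subtype) (fun x => partA x.1 x.2)
  let g : ↥S →ₗ[ℝ] (↥K ⧸ N₂) := N₂.mkQ.comp g0
  have hker : N₁ ≤ LinearMap.ker g := by
    rintro ⟨x, hx⟩ hxN
    obtain ⟨β, hβ, hβx⟩ := hxN
    have hβx' : dTo V d p β = x := hβx
    have hrange : δ p x ∈ LinearMap.range (dTo V d (p - 1)) := by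
      rw [← hβx']; exact partB β hβ
    show N₂.mkQ (g0 ⟨x, hx⟩) = 0
    rw [Submodule.mkQ_apply, Submodule.Quotient.mk_eq_zero]
    exact hrange
  refine ⟨Submodule.liftQ N₁ g hker, fun φ hφ hδφ => ?_⟩
  rw [Submodule.liftQ_apply]
  rfl
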